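/- If random variables Z₁, …, Z_J are mutually independent and W is any random variable, then the sum of marginal mutual informations is bounded by the joint mutual information: Σ_{j=1}^J I(W; Z_j) ≤ I(W; (Z₁,…,Z_J)). (This is the paper's 'single-letterization' inequality Eq. (8): aligning each modality individually gives a lower bound of aligning all modalities jointly.) -/

import Mathlib

open Real Finset

/-- Distribution of a random variable `X` on a finite probability space with weights `p`. -/
noncomputable def rvDist {Ω γ : Type*} [Fintype Ω] [DecidableEq γ]
    (p : Ω → ℝ) (X : Ω → γ) (y : γ) : ℝ :=
  ∑ ω, if X ω = y then p ω else 0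

/-- Shannon entropy of the distribution of a random variable. -/
noncomputable def rvEntropy {Ω γ : Type*} [Fintype Ω] [Fintype γ] [DecidableEq γ]
    (p : Ω → ℝ) (X : Ω → γ) : ℝ :=
  -∑ y, rvDist p X y * Real.log (rvDist p X y)

/-- Mutual information `I(X;Y) = H(X) + H(Y) − H(X,Y)`. -/
noncomputable def rvMI {Ω γ δ : Type*} [Fintype Ω] [Fintype γ] [Fintype δ]
    [DecidableEq γ] [DecidableEq δ] (p : Ω → ℝ) (X : Ω → γ) (Y : Ω → δ) : ℝ :=
  rvEntropy p X + rvEntropy p Y - rvEntropy p (fun ω => (X ω, Y ω))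

/-!
Write `P_X` for the distribution of `X`. Every entropy is an expectation over `Ω`,
`H(X) = -∑ ω, p ω * log P_X (X ω)`, and at a point of positive mass all the probabilities
involved are positive, so logarithms of products split into sums of logarithms.
Independence thus gives `H(Z) = ∑ H(Z_j)`. Gibbs' inequality, applied with the
sub-probability `q(w, v) = P_W(w) ∏ⱼ P(Z_j = v_j | W = w)`, gives the subadditivity
`H(Z | W) ≤ ∑ H(Z_j | W)`. Since `I(W; Y) = H(Y) - H(Y | W)`, the theorem follows.
-/

lemma mul_log_sub_mul_log_le {a b : ℝ} (ha : 0 ≤ a) (hb : 0 ≤ b) (hab : b = 0 → a = 0) :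
    a * log b - a * log a ≤ b - a := by
  rcases ha.eq_or_lt with rfl | ha
  · simpa using hb
  have hb : 0 < b := hb.lt_of_ne fun h => ha.ne' (hab h.symm)
  have h := mul_le_mul_of_nonneg_left (log_le_sub_one_of_pos (div_pos hb ha)) ha.le
  rw [log_div hb.ne' ha.ne', mul_sub_one, mul_div_cancel₀ b ha.ne'] at h
  linarith

lemma sum_mul_log_le_sum_mul_log {ι : Type*} [Fintype ι] {a b : ι → ℝ}
    (ha : ∀ i, 0 ≤ a i) (hb : ∀ i, 0 ≤ b i) (hab : ∀ i, b i = 0 → a i = 0)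
    (hsum : ∑ i, b i ≤ ∑ i, a i) :
    ∑ i, a i * log (b i) ≤ ∑ i, a i * log (a i) := by
  have h := sum_le_sum fun i (_ : i ∈ univ) => mul_log_sub_mul_log_le (ha i) (hb i) (hab i)
  rw [sum_sub_distrib, sum_sub_distrib] at h
  linarith

section FiniteProbability

variable {Ω γ δ : Type*} [Fintype Ω] [DecidableEq γ] [DecidableEq δ] {p : Ω → ℝ}

/-- `H(Y | X)`. -/
noncomputable def rvCondEntropy [Fintype γ] [Fintype δ] (p : Ω → ℝ) (Y : Ω → δ) (X : Ω → γ) :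
    ℝ :=
  rvEntropy p (fun ω => (X ω, Y ω)) - rvEntropy p X

/-- `P(Y = y | X = x)`, which is `0` when `P(X = x) = 0`. -/
noncomputable def rvCondDist (p : Ω → ℝ) (Y : Ω → δ) (X : Ω → γ) (x : γ) (y : δ) : ℝ :=
  rvDist p (fun ω => (X ω, Y ω)) (x, y) / rvDist p X x

lemma rvDist_nonneg (hp0 : ∀ ω, 0 ≤ p ω) (X : Ω → γ) (y : γ) : 0 ≤ rvDist p X y :=
  sum_nonneg fun ω _ => by split <;> simp [hp0 ω]

lemma rvDist_apply_pos (hp0 : ∀ ω, 0 ≤ p ω) (X : Ω → γ) {ω : Ω} (hω : 0 < p ω) :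
    0 < rvDist p X (X ω) := by
  refine hω.trans_le ?_
  have h := single_le_sum (f := fun ω' => if X ω' = X ω then p ω' else 0)
    (fun ω' _ => by split <;> simp [hp0 ω']) (mem_univ ω)
  rw [rvDist]
  simpa using h

lemma sum_rvDist_mul [Fintype γ] (p : Ω → ℝ) (X : Ω → γ) (f : γ → ℝ) :
    ∑ y, rvDist p X y * f y = ∑ ω, p ω * f (X ω) := by
  simp only [rvDist, sum_mul, ite_mul, zero_mul]
  rw [sum_comm]
  simp

lemma sum_rvDist [Fintype γ] (p : Ω → ℝ) (X : Ω → γ) : ∑ y, rvDist p X y = ∑ ω, p ω := by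
  simpa using sum_rvDist_mul p X 1

lemma sum_rvDist_pair [Fintype δ] (p : Ω → ℝ) (X : Ω → γ) (Y : Ω → δ) (x : γ) :
    ∑ y, rvDist p (fun ω => (X ω, Y ω)) (x, y) = rvDist p X x := by
  simp only [rvDist, Prod.ext_iff]
  rw [sum_comm]
  refine sum_congr rfl fun ω _ => ?_
  by_cases h : X ω = x <;> simp [h]

lemma rvEntropy_eq_neg_sum_mul_log [Fintype γ] (p : Ω → ℝ) (X : Ω → γ) :
    rvEntropy p X = -∑ ω, p ω * log (rvDist p X (X ω)) := by
  rw [rvEntropy, sum_rvDist_mul p X fun y => log (rvDist p X y)]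

lemma rvMI_eq_rvEntropy_sub_rvCondEntropy [Fintype γ] [Fintype δ] (p : Ω → ℝ) (X : Ω → γ)
    (Y : Ω → δ) : rvMI p X Y = rvEntropy p Y - rvCondEntropy p Y X := by
  rw [rvMI, rvCondEntropy]
  ring

lemma rvCondDist_nonneg (hp0 : ∀ ω, 0 ≤ p ω) (Y : Ω → δ) (X : Ω → γ) (x : γ) (y : δ) :
    0 ≤ rvCondDist p Y X x y :=
  div_nonneg (rvDist_nonneg hp0 _ _) (rvDist_nonneg hp0 _ _)

lemma sum_rvCondDist_le_one [Fintype δ] (p : Ω → ℝ) (Y : Ω → δ) (X : Ω → γ) (x : γ) :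
    ∑ y, rvCondDist p Y X x y ≤ 1 := by
  simp only [rvCondDist]
  rw [← sum_div, sum_rvDist_pair]
  exact div_self_le_one _

lemma rvCondDist_apply_pos (hp0 : ∀ ω, 0 ≤ p ω) (Y : Ω → δ) (X : Ω → γ) {ω : Ω}
    (hω : 0 < p ω) : 0 < rvCondDist p Y X (X ω) (Y ω) :=
  div_pos (rvDist_apply_pos hp0 (fun ω => (X ω, Y ω)) hω) (rvDist_apply_pos hp0 X hω)

lemma log_rvCondDist_apply (hp0 : ∀ ω, 0 ≤ p ω) (Y : Ω → δ) (X : Ω → γ) {ω : Ω}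
    (hω : 0 < p ω) :
    log (rvCondDist p Y X (X ω) (Y ω)) =
      log (rvDist p (fun ω => (X ω, Y ω)) (X ω, Y ω)) - log (rvDist p X (X ω)) :=
  log_div (rvDist_apply_pos hp0 (fun ω => (X ω, Y ω)) hω).ne' (rvDist_apply_pos hp0 X hω).ne'

lemma rvEntropy_le_neg_sum_mul_log [Fintype γ] (hp0 : ∀ ω, 0 ≤ p ω) (X : Ω → γ) {q : γ → ℝ}
    (hq0 : ∀ y, 0 ≤ q y) (hq : ∑ y, q y ≤ ∑ ω, p ω) (hpos : ∀ ω, 0 < p ω → 0 < q (X ω)) :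
    rvEntropy p X ≤ -∑ ω, p ω * log (q (X ω)) := by
  have hsupp : ∀ y, q y = 0 → rvDist p X y = 0 := fun y hy =>
    sum_eq_zero fun ω _ => by
      split_ifs with hX
      · subst hX
        by_contra hne
        exact (hpos ω ((hp0 ω).lt_of_ne' hne)).ne' hy
      · rfl
  rw [rvEntropy, ← sum_rvDist_mul p X fun y => log (q y), neg_le_neg_iff]
  exact sum_mul_log_le_sum_mul_log (rvDist_nonneg hp0 X) hq0 hsupp
    (hq.trans_eq (sum_rvDist p X).symm)

end FiniteProbability

section Independence

variable {Ω ι γ : Type*} [Fintype Ω] [Fintype ι] [DecidableEq ι] {β : ι → Type*}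
  [∀ i, Fintype (β i)] [∀ i, DecidableEq (β i)] [Fintype γ] [DecidableEq γ] {p : Ω → ℝ}

theorem rvEntropy_pi_eq_sum_of_indep (hp0 : ∀ ω, 0 ≤ p ω) (Z : ∀ i, Ω → β i)
    (hindep : ∀ v : ∀ i, β i, rvDist p (fun ω i => Z i ω) v = ∏ i, rvDist p (Z i) (v i)) :
    rvEntropy p (fun ω i => Z i ω) = ∑ i, rvEntropy p (Z i) := by
  simp only [rvEntropy_eq_neg_sum_mul_log, hindep, sum_neg_distrib, neg_inj]
  rw [sum_comm]
  refine sum_congr rfl fun ω _ => ?_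
  rcases (hp0 ω).eq_or_lt with h | h
  · simp [← h]
  · rw [log_prod fun i _ => (rvDist_apply_pos hp0 (Z i) h).ne', mul_sum]

lemma sum_mul_prod_rvCondDist_le (hp0 : ∀ ω, 0 ≤ p ω) (W : Ω → γ) (Z : ∀ i, Ω → β i) :
    ∑ x : γ × (∀ i, β i), rvDist p W x.1 * ∏ i, rvCondDist p (Z i) W x.1 (x.2 i) ≤
      ∑ ω, p ω := by
  rw [Fintype.sum_prod_type, ← sum_rvDist p W]
  refine sum_le_sum fun w _ => ?_
  dsimp only
  rw [← mul_sum, ← Fintype.prod_sum fun i z => rvCondDist p (Z i) W w z]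
  exact mul_le_of_le_one_right (rvDist_nonneg hp0 W w) <|
    prod_le_one (fun i _ => sum_nonneg fun z _ => rvCondDist_nonneg hp0 _ _ _ _)
      fun i _ => sum_rvCondDist_le_one p (Z i) W w

theorem rvCondEntropy_pi_le_sum (hp0 : ∀ ω, 0 ≤ p ω) (W : Ω → γ) (Z : ∀ i, Ω → β i) :
    rvCondEntropy p (fun ω i => Z i ω) W ≤ ∑ i, rvCondEntropy p (Z i) W := by
  set q : γ × (∀ i, β i) → ℝ := fun x =>
    rvDist p W x.1 * ∏ i, rvCondDist p (Z i) W x.1 (x.2 i) with hq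
  have hq0 : ∀ x, 0 ≤ q x := fun x =>
    mul_nonneg (rvDist_nonneg hp0 _ _) (prod_nonneg fun i _ => rvCondDist_nonneg hp0 _ _ _ _)
  have hpos : ∀ ω, 0 < p ω → 0 < q (W ω, fun i => Z i ω) := fun ω hω =>
    mul_pos (rvDist_apply_pos hp0 W hω) (prod_pos fun i _ => rvCondDist_apply_pos hp0 _ _ hω)
  have hlog : ∀ ω, p ω * log (q (W ω, fun i => Z i ω)) =
      p ω * log (rvDist p W (W ω)) +
        ∑ i, (p ω * log (rvDist p (fun ω => (W ω, Z i ω)) (W ω, Z i ω)) -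
          p ω * log (rvDist p W (W ω))) := by
    intro ω
    rcases (hp0 ω).eq_or_lt with h | h
    · simp [← h]
    · rw [hq, log_mul (rvDist_apply_pos hp0 W h).ne'
        (prod_pos fun i _ => rvCondDist_apply_pos hp0 _ _ h).ne',
        log_prod fun i _ => (rvCondDist_apply_pos hp0 _ _ h).ne', mul_add, mul_sum]
      simp only [log_rvCondDist_apply hp0 _ _ h, mul_sub]
  have hcross := rvEntropy_le_neg_sum_mul_log hp0 (fun ω => (W ω, fun i => Z i ω)) hq0
    (sum_mul_prod_rvCondDist_le hp0 W Z) hpos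
  simp only [hlog, sum_add_distrib] at hcross
  rw [sum_comm] at hcross
  simp only [rvCondEntropy, rvEntropy_eq_neg_sum_mul_log, sum_sub_distrib,
    sum_neg_distrib] at hcross ⊢
  linarith

end Independence

theorem sum_MI_le_MI_joint_of_indep_general {Ω : Type*} [Fintype Ω] {J : ℕ}
    {β : Fin J → Type*} [∀ j, Fintype (β j)] [∀ j, DecidableEq (β j)]
    {γ : Type*} [Fintype γ] [DecidableEq γ]
    (p : Ω → ℝ) (hp0 : ∀ ω, 0 ≤ p ω)
    (Z : ∀ j, Ω → β j) (W : Ω → γ)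
    (hindep : ∀ v : ∀ j, β j,
      rvDist p (fun ω j => Z j ω) v = ∏ j, rvDist p (Z j) (v j)) :
    ∑ j, rvMI p W (Z j) ≤ rvMI p W (fun ω j => Z j ω) := by
  simp only [rvMI_eq_rvEntropy_sub_rvCondEntropy, sum_sub_distrib,
    rvEntropy_pi_eq_sum_of_indep hp0 Z hindep]
  linarith [rvCondEntropy_pi_le_sum hp0 W Z]

/-- Single-letterization: if `Z₁, …, Z_J` are mutually independent, then
`Σ_j I(W; Z_j) ≤ I(W; (Z₁,…,Z_J))`. -/
theorem sum_MI_le_MI_joint_of_indep {Ω : Type*} [Fintype Ω] {J : ℕ}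
    {β : Fin J → Type*} [∀ j, Fintype (β j)] [∀ j, DecidableEq (β j)]
    {γ : Type*} [Fintype γ] [DecidableEq γ]
    (p : Ω → ℝ) (hp0 : ∀ ω, 0 ≤ p ω) (hp1 : ∑ ω, p ω = 1)
    (Z : ∀ j, Ω → β j) (W : Ω → γ)
    (hindep : ∀ v : ∀ j, β j,
      rvDist p (fun ω j => Z j ω) v = ∏ j, rvDist p (Z j) (v j)) :
    ∑ j, rvMI p W (Z j) ≤ rvMI p W (fun ω j => Z j ω) :=
  sum_MI_le_MI_joint_of_indep_general p hp0 Z W hindep
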